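/- arXiv:1212.2923 — 3 statements merged into one kernel-verified Lean document; each statement's English description precedes it below -/
import Mathlib

section
/- Let R be a commutative ring, M an R-module, q a natural number, x : Fin q → M a family of elements of M, d : Fin q → ℕ, and w : Fin q → ExteriorAlgebra R M a family of elements with w i ∈ ⋀[R]^{d i} M for every i. Then, with all products taken in increasing order of the index i, ∏_{i=0}^{q−1} (ι(x i) · (w i)) = (−1)^{Σ_{i=0}^{q−1} (q−1−i)·(d i)} · (∏_{i=0}^{q−1} ι(x i)) · (∏_{i=0}^{q−1} (w i)) in ExteriorAlgebra R M. -/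
/-!
The exterior algebra is graded commutative: for `a` of degree `m` and `b` of degree `n`,
`a * b = (-1)^(m n) * (b * a)`. In the product `∏ (ι (x i) * w i)` the factor `w 0` must move past
the product of the `q - 1` later generators `ι (x i)`, a homogeneous element of degree `q - 1`,
which costs `(-1)^((q - 1) d 0)`; induction on `q` collects these signs.
-/

open ExteriorAlgebra

namespace ExteriorAlgebra

variable {R M : Type*} [CommRing R] [AddCommGroup M] [Module R M]

theorem mul_ι_of_mem_exteriorPower {n : ℕ} {a : ExteriorAlgebra R M} (ha : a ∈ ⋀[R]^n M)
    (y : M) : a * ι R y = (-1) ^ n * (ι R y * a) := by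
  induction ha using Submodule.pow_induction_on_left' with
  | algebraMap r => rw [pow_zero, one_mul, Algebra.commutes]
  | add a b i _ _ iha ihb => rw [add_mul, mul_add, iha, ihb, mul_add]
  | mem_mul _ hm i a _ ih =>
    obtain ⟨x, rfl⟩ := hm
    have anticomm : ι R x * ι R y = -(ι R y * ι R x) :=
      eq_neg_of_add_eq_zero_left (ι_add_mul_swap x y)
    calc ι R x * a * ι R y = ι R x * ((-1) ^ i * (ι R y * a)) := by rw [mul_assoc, ih]
      _ = (-1) ^ (i + 1) * (ι R y * (ι R x * a)) := by
        rw [((Commute.neg_one_left _).pow_left i).symm.left_comm, ← mul_assoc (ι R x), anticomm]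
        simp only [pow_succ, neg_mul, mul_neg, one_mul, mul_assoc]

theorem mul_comm_of_mem_exteriorPower {m n : ℕ} {a b : ExteriorAlgebra R M}
    (ha : a ∈ ⋀[R]^m M) (hb : b ∈ ⋀[R]^n M) : a * b = (-1) ^ (m * n) * (b * a) := by
  induction hb using Submodule.pow_induction_on_left' with
  | algebraMap r => rw [mul_zero, pow_zero, one_mul, Algebra.commutes]
  | add b c k _ _ ihb ihc => rw [mul_add, ihb, ihc, add_mul, mul_add]
  | mem_mul _ hv k b _ ih =>
    obtain ⟨y, rfl⟩ := hv
    calc a * (ι R y * b) = (-1) ^ m * (ι R y * (a * b)) := by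
          rw [← mul_assoc, mul_ι_of_mem_exteriorPower ha, mul_assoc, mul_assoc]
      _ = (-1) ^ (m * (k + 1)) * (ι R y * b * a) := by
        rw [ih, ((Commute.neg_one_left _).pow_left _).symm.left_comm, ← mul_assoc, ← pow_add,
          mul_add_one, add_comm, mul_assoc]

end ExteriorAlgebra

/-- Interleaving sign in the exterior algebra: moving each degree-one factor `ι (x i)` to the
front of the product of the `w i`'s (where `w i` has degree `d i`) produces the sign
`(−1)^{Σ_{i} (q−1−i)·(d i)}`. -/
theorem stmt_5 {R M : Type*} [CommRing R] [AddCommGroup M] [Module R M] (q : ℕ)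
    (x : Fin q → M) (d : Fin q → ℕ) (w : Fin q → ExteriorAlgebra R M)
    (hw : ∀ i, w i ∈ ⋀[R]^(d i) M) :
    (List.ofFn fun i => ExteriorAlgebra.ι R (x i) * w i).prod =
      (-1 : ExteriorAlgebra R M) ^ (∑ i : Fin q, (q - 1 - (i : ℕ)) * d i) *
        ((List.ofFn fun i => ExteriorAlgebra.ι R (x i)).prod * (List.ofFn w).prod) := by
  induction q with
  | zero => simp
  | succ q ih =>
    have sign : ∑ i : Fin (q + 1), (q + 1 - 1 - (i : ℕ)) * d i =
        q * d 0 + ∑ i : Fin q, (q - 1 - (i : ℕ)) * d i.succ := by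
      rw [Fin.sum_univ_succ]
      congr 1
      refine Finset.sum_congr rfl fun i _ => ?_
      rw [Fin.val_succ]
      congr 1
      omega
    set P := (List.ofFn fun i => ι R (x i.succ)).prod
    have hP : P ∈ ⋀[R]^q M := ιMulti_range R q ⟨_, ιMulti_apply _⟩
    simp only [List.ofFn_succ (n := q), List.prod_cons]
    rw [ih _ _ _ fun i => hw i.succ, sign]
    set W := (List.ofFn fun i => w i.succ).prod
    set S := ∑ i : Fin q, (q - 1 - (i : ℕ)) * d i.succ
    have central (k : ℕ) (a b : ExteriorAlgebra R M) : a * ((-1) ^ k * b) = (-1) ^ k * (a * b) :=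
      ((Commute.neg_one_left a).pow_left k).symm.left_comm b
    calc ι R (x 0) * w 0 * ((-1) ^ S * (P * W))
        = (-1) ^ S * (ι R (x 0) * ((w 0 * P) * W)) := by simp only [central, mul_assoc]
      _ = (-1) ^ S * (ι R (x 0) * ((-1) ^ (d 0 * q) * (P * w 0) * W)) := by
        rw [mul_comm_of_mem_exteriorPower (hw 0) hP]
      _ = (-1) ^ (q * d 0 + S) * (ι R (x 0) * P * (w 0 * W)) := by
        rw [mul_assoc ((-1) ^ _), central, central, ← mul_assoc, ← pow_add, mul_comm (d 0),
          add_comm]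
        simp only [mul_assoc]
end

section
/- Let X and Y be topological additive groups (additive groups equipped with topologies making addition and negation continuous). Let R : X → Y be a continuous additive group homomorphism admitting a continuous additive group homomorphism E : Y → X as a right inverse, i.e. R ∘ E is the identity of Y. Then for every residual (comeagre) subset S of Y, the preimage R⁻¹(S) is residual in X. -/
/-- The translate `y ↦ E y + (-E (R x) + x)` of a right inverse `E` is a continuous section of `R`
through `x`, so `R` is open. -/
theorem AddMonoidHom.isOpenMap_of_rightInverse {X Y : Type*} [AddGroup X] [TopologicalSpace X]
    [ContinuousAdd X] [AddGroup Y] [TopologicalSpace Y] (R : X →+ Y) {E : Y → X}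
    (hE : Continuous E) (hRE : Function.RightInverse E R) : IsOpenMap R :=
  IsOpenMap.of_sections fun x =>
    ⟨fun y => E y + (-E (R x) + x), (hE.add continuous_const).continuousAt,
      by simp only [add_neg_cancel_left], fun y => by simp only [map_add, map_neg, hRE _,
        neg_add_cancel, add_zero]⟩

theorem stmt_8_general {X Y : Type*} [AddGroup X] [TopologicalSpace X] [IsTopologicalAddGroup X]
    [AddGroup Y] [TopologicalSpace Y]
    (R : X →+ Y) (E : Y →+ X) (hR : Continuous R) (hE : Continuous E)
    (hRE : ∀ y, R (E y) = y) (S : Set Y) (hS : S ∈ residual Y) :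
    (⇑R) ⁻¹' S ∈ residual X :=
  tendsto_residual_of_isOpenMap hR (R.isOpenMap_of_rightInverse hE hRE) hS

/-- If a continuous additive group homomorphism `R` admits a continuous additive group
homomorphism `E` as a right inverse, then the preimage under `R` of a residual (comeagre)
set is residual. -/
theorem stmt_8 {X Y : Type*} [AddGroup X] [TopologicalSpace X] [IsTopologicalAddGroup X]
    [AddGroup Y] [TopologicalSpace Y] [IsTopologicalAddGroup Y]
    (R : X →+ Y) (E : Y →+ X) (hR : Continuous R) (hE : Continuous E)
    (hRE : ∀ y, R (E y) = y) (S : Set Y) (hS : S ∈ residual Y) :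
    (⇑R) ⁻¹' S ∈ residual X :=
  stmt_8_general R E hR hE hRE S hS
end

section
/- Let n be a natural number and let V be an ℝ-submodule of ℂⁿ = (Fin n → ℂ) such that V ⊓ J(V) = ⊥ and V ⊔ J(V) = ⊤, where J is the ℝ-linear endomorphism of ℂⁿ given by multiplication by the imaginary unit. Then there exists a ℂ-linear automorphism g of ℂⁿ such that the image under g of the standard real subspace ℝⁿ = {v : Fin n → ℂ | every coordinate of v has imaginary part 0} (a ℝ-submodule of ℂⁿ) equals V. -/
/-!
A real basis of `V` is a complex basis of `ℂⁿ`: splitting complex coefficients into real and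
imaginary parts, `V ⊓ iV = 0` turns real linear independence into complex linear independence,
and `V + iV = ℂⁿ` makes the complex span everything. The ℂ-linear automorphism sending the
standard basis to this basis maps `ℝⁿ`, the real span of the standard basis, onto `V`.
-/

/-- The ℝ-linear endomorphism of `ℂⁿ = Fin n → ℂ` given by coordinatewise multiplication by
the imaginary unit `i`. -/
noncomputable def mulI (n : ℕ) : (Fin n → ℂ) →ₗ[ℝ] (Fin n → ℂ) :=
  (LinearMap.lsmul ℂ (Fin n → ℂ) Complex.I).restrictScalars ℝ

/-- The standard real subspace `ℝⁿ ⊆ ℂⁿ` of vectors all of whose coordinates have imaginary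
part `0`, as an ℝ-submodule of `Fin n → ℂ`. -/
noncomputable def realSubspace (n : ℕ) : Submodule ℝ (Fin n → ℂ) where
  carrier := {v | ∀ i, (v i).im = 0}
  add_mem' := by
    intro u v hu hv i
    simp [Complex.add_im, hu i, hv i]
  zero_mem' := by
    intro i
    simp
  smul_mem' := by
    intro r v hv i
    simp [Complex.smul_im, hv i]

section RealForm

variable {E : Type*} [AddCommGroup E] [Module ℂ E] [Module ℝ E] [IsScalarTower ℝ ℂ E]
  {V : Submodule ℝ E} {J : E →ₗ[ℝ] E}

theorem Complex.smul_eq_re_smul_add_I_smul_im_smul (z : ℂ) (v : E) :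
    z • v = z.re • v + Complex.I • z.im • v := by
  rw [← algebraMap_smul ℂ z.re v, ← algebraMap_smul ℂ z.im v, smul_smul, ← add_smul]
  congr 1
  simp [Complex.ext_iff]

theorem LinearIndependent.complex_of_inf_map_eq_bot {ι : Type*} {b : ι → E}
    (hb : LinearIndependent ℝ b) (hbV : ∀ i, b i ∈ V) (hJ : ∀ v, J v = Complex.I • v)
    (hV : V ⊓ V.map J = ⊥) : LinearIndependent ℂ b := by
  rw [linearIndependent_iff'] at hb ⊢
  intro s g hg
  set x := ∑ i ∈ s, (g i).re • b i
  set y := ∑ i ∈ s, (g i).im • b i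
  have hxy : x + Complex.I • y = 0 := by
    simp only [x, y, ← hg, Finset.smul_sum, ← Finset.sum_add_distrib,
      Complex.smul_eq_re_smul_add_I_smul_im_smul (g _)]
  have hxV : x ∈ V := V.sum_mem fun i _ => V.smul_mem _ (hbV i)
  have hxJ : x ∈ V.map J := by
    refine ⟨-y, V.neg_mem (V.sum_mem fun i _ => V.smul_mem _ (hbV i)), ?_⟩
    rw [hJ, smul_neg, neg_eq_iff_add_eq_zero, add_comm, hxy]
  have hx : x = 0 := by simpa [hV] using Submodule.mem_inf.2 ⟨hxV, hxJ⟩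
  have hy : y = 0 := by
    rw [hx, zero_add] at hxy
    exact (smul_eq_zero.1 hxy).resolve_left Complex.I_ne_zero
  exact fun i hi => Complex.ext (hb s _ hx i hi) (hb s _ hy i hi)

theorem Submodule.span_complex_eq_top_of_sup_map_eq_top {s : Set E} (hs : span ℝ s = V)
    (hJ : ∀ v, J v = Complex.I • v) (hV : V ⊔ V.map J = ⊤) : span ℂ s = ⊤ := by
  have hVle : V ≤ (span ℂ s).restrictScalars ℝ := hs ▸ span_le_restrictScalars ℝ ℂ s
  refine restrictScalars_eq_top_iff ℝ ℂ E |>.1 <| top_unique <| hV ▸ sup_le hVle ?_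
  rintro _ ⟨v, hv, rfl⟩
  rw [hJ]
  exact (span ℂ s).smul_mem Complex.I (hVle hv)

end RealForm

theorem realSubspace_eq_span_range_basisFun (n : ℕ) :
    realSubspace n = Submodule.span ℝ (Set.range (Pi.basisFun ℂ (Fin n))) := by
  refine le_antisymm (fun v hv => ?_) (Submodule.span_le.2 ?_)
  · rw [← (Pi.basisFun ℂ (Fin n)).sum_repr v]
    refine Submodule.sum_mem _ fun i _ => ?_
    rw [Complex.smul_eq_re_smul_add_I_smul_im_smul, Pi.basisFun_repr, hv i, zero_smul, smul_zero,
      add_zero]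
    exact Submodule.smul_mem _ _ (Submodule.subset_span ⟨i, rfl⟩)
  · rintro _ ⟨i, rfl⟩ j
    by_cases h : j = i <;> simp [h]

/-- Transitivity of the `GL_n(ℂ)`-action on real boundary conditions: every ℝ-subspace `V`
of `ℂⁿ` with `iV ⊕ V = ℂⁿ` is the image of the standard real subspace `ℝⁿ` under some
ℂ-linear automorphism of `ℂⁿ`. -/
theorem stmt_10 (n : ℕ) (V : Submodule ℝ (Fin n → ℂ))
    (h₁ : V ⊓ Submodule.map (mulI n) V = ⊥)
    (h₂ : V ⊔ Submodule.map (mulI n) V = ⊤) :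
    ∃ g : (Fin n → ℂ) ≃ₗ[ℂ] (Fin n → ℂ),
      Submodule.map (g.toLinearMap.restrictScalars ℝ) (realSubspace n) = V := by
  obtain ⟨s, hsV, hspan, hs⟩ := exists_linearIndependent ℝ (V : Set (Fin n → ℂ))
  rw [Submodule.span_eq] at hspan
  have hJ : ∀ v, mulI n v = Complex.I • v := fun _ => rfl
  let c := Module.Basis.mk (hs.complex_of_inf_map_eq_bot (fun i => hsV i.2) hJ h₁)
    (by rw [Subtype.range_coe, Submodule.span_complex_eq_top_of_sup_map_eq_top hspan hJ h₂])
  let std := Pi.basisFun ℂ (Fin n)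
  refine ⟨std.equiv c (std.indexEquiv c), ?_⟩
  have hstd : ⇑(std.equiv c (std.indexEquiv c)) ∘ std = c ∘ std.indexEquiv c :=
    funext fun i => std.equiv_apply i _ _
  rw [realSubspace_eq_span_range_basisFun, Submodule.map_span, ← Set.range_comp,
    LinearMap.coe_restrictScalars, LinearEquiv.coe_coe, hstd, EquivLike.range_comp,
    Module.Basis.coe_mk, Subtype.range_coe, hspan]
end
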